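/- Let X and Y be real Banach spaces (no approximation property hypothesis). If T : X → Y is a continuous linear operator such that the composition π_Y ∘ T : X → Y** (where π_Y is the canonical isometric embedding of Y into its bidual) compactly factors through the space ℓ², then T itself compactly factors through ℓ²; that is, there exist compact operators A : X → ℓ² and B : ℓ² → Y with T = B ∘ A. (This holds because every closed subspace of a Hilbert space is complemented.) -/

import Mathlib

/-!
If `π_Y ∘ T = B ∘ A` through `ℓ²`, replace `B` by `B ∘ P`, where `P` is the orthogonal projection
onto the closure `K` of the range of `A`. This is still compact and still agrees with `B` on the
range of `A`, and its values lie in `B(K)`, hence in the range of `π_Y`, which is closed since `Y`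
is complete. Pulling `B ∘ P` back along the isometry `π_Y` gives the required compact operator.
-/

open NormedSpace

/-- An operator `T : X → Y` compactly factors through `F` if `T = B ∘ A` for some
compact operators `A : X → F` and `B : F → Y`. -/
def CompactlyFactorsThrough (F : Type*) [NormedAddCommGroup F] [NormedSpace ℝ F]
    (X Y : Type*) [NormedAddCommGroup X] [NormedSpace ℝ X]
    [NormedAddCommGroup Y] [NormedSpace ℝ Y] (T : X →L[ℝ] Y) : Prop :=
  ∃ (A : X →L[ℝ] F) (B : F →L[ℝ] Y),
    IsCompactOperator A ∧ IsCompactOperator B ∧ T = B.comp A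

open Set

theorem IsCompactOperator.of_comp_isClosedEmbedding {M₁ M₂ M₃ : Type*} [Zero M₁]
    [TopologicalSpace M₁] [TopologicalSpace M₂] [TopologicalSpace M₃] {f : M₁ → M₂} {g : M₂ → M₃}
    (hg : Topology.IsClosedEmbedding g) (hgf : IsCompactOperator (g ∘ f)) :
    IsCompactOperator f :=
  let ⟨_, hK, hKf⟩ := hgf
  ⟨_, hg.isCompact_preimage hK, hKf⟩

section

variable {𝕜 H Y Z : Type*} [NontriviallyNormedField 𝕜]
  [NormedAddCommGroup H] [NormedSpace 𝕜 H] [NormedAddCommGroup Y] [NormedSpace 𝕜 Y]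
  [NormedAddCommGroup Z] [NormedSpace 𝕜 Z]

theorem LinearIsometry.exists_comp_eq_of_forall_mem_range (ι : Y →ₗᵢ[𝕜] Z) (C : H →L[𝕜] Z)
    (hC : ∀ x, C x ∈ LinearMap.range ι.toLinearMap) :
    ∃ C' : H →L[𝕜] Y, ι.toContinuousLinearMap ∘L C' = C :=
  ⟨(ι.equivRange.symm : LinearMap.range ι.toLinearMap →L[𝕜] Y) ∘L C.codRestrict _ hC, by
    ext x
    exact congrArg Subtype.val (ι.equivRange.apply_symm_apply ⟨C x, hC x⟩)⟩

end

section

variable {𝕜 X H Y Z : Type*} [RCLike 𝕜]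
  [NormedAddCommGroup X] [NormedSpace 𝕜 X]
  [NormedAddCommGroup H] [InnerProductSpace 𝕜 H] [CompleteSpace H]
  [NormedAddCommGroup Y] [NormedSpace 𝕜 Y] [CompleteSpace Y]
  [NormedAddCommGroup Z] [NormedSpace 𝕜 Z]

theorem IsCompactOperator.exists_isCompactOperator_comp_eq {A : X →L[𝕜] H} {B : H →L[𝕜] Z}
    (hB : IsCompactOperator B) (ι : Y →ₗᵢ[𝕜] Z) {T : X →L[𝕜] Y}
    (hBA : B ∘L A = ι.toContinuousLinearMap ∘L T) :
    ∃ B' : H →L[𝕜] Y, IsCompactOperator B' ∧ B' ∘L A = T := by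
  set K := (LinearMap.range (A : X →ₗ[𝕜] H)).topologicalClosure
  have hι : Topology.IsClosedEmbedding ι := ι.isometry.isClosedEmbedding
  have hBK : MapsTo B K (range ι) := by
    rw [Submodule.topologicalClosure_coe, LinearMap.coe_range, ← hι.isClosed_range.closure_eq]
    refine MapsTo.closure ?_ B.continuous
    rintro _ ⟨x, rfl⟩
    exact ⟨T x, congr($hBA x).symm⟩
  obtain ⟨B', hB'⟩ := ι.exists_comp_eq_of_forall_mem_range (B ∘L K.starProjection)
    fun x => hBK (K.starProjection_apply_mem x)
  refine ⟨B', .of_comp_isClosedEmbedding hι ?_, ?_⟩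
  · rw [show ι ∘ B' = ⇑(B ∘L K.starProjection) from congr(⇑$hB')]
    exact hB.comp_clm _
  · ext x
    have hAx : K.starProjection (A x) = A x :=
      K.starProjection_eq_self_iff.2 (Submodule.le_topologicalClosure _ ⟨x, rfl⟩)
    apply ι.injective
    calc ι (B' (A x)) = B (K.starProjection (A x)) := congr($hB' (A x))
      _ = ι (T x) := by rw [hAx]; exact congr($hBA x)

end

theorem l2_factorization_general
    (X Y : Type*) [NormedAddCommGroup X] [NormedSpace ℝ X]
    [NormedAddCommGroup Y] [NormedSpace ℝ Y] [CompleteSpace Y]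
    (T : X →L[ℝ] Y)
    (hT : CompactlyFactorsThrough (lp (fun _ : ℕ => ℝ) 2)
      X (StrongDual ℝ (StrongDual ℝ Y)) ((inclusionInDoubleDual ℝ Y).comp T)) :
    CompactlyFactorsThrough (lp (fun _ : ℕ => ℝ) 2) X Y T := by
  obtain ⟨A, B, hA, hB, hBA⟩ := hT
  obtain ⟨B', hB', hB'A⟩ :=
    hB.exists_isCompactOperator_comp_eq (inclusionInDoubleDualLi ℝ) hBA.symm
  exact ⟨A, B', hA, hB', hB'A.symm⟩

theorem l2_factorization
    (X Y : Type*) [NormedAddCommGroup X] [NormedSpace ℝ X] [CompleteSpace X]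
    [NormedAddCommGroup Y] [NormedSpace ℝ Y] [CompleteSpace Y]
    (T : X →L[ℝ] Y)
    (hT : CompactlyFactorsThrough (lp (fun _ : ℕ => ℝ) 2)
      X (StrongDual ℝ (StrongDual ℝ Y)) ((inclusionInDoubleDual ℝ Y).comp T)) :
    CompactlyFactorsThrough (lp (fun _ : ℕ => ℝ) 2) X Y T :=
  l2_factorization_general X Y T hT
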